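/- If π is a path for agent set A and π' is a path for disjoint agent set A', both collision-free internally and with each other, and π'' is the joint path formed by combining them, then cost(π'') = cost(π) + cost(π'); consequently, if π and π' are each cost-optimal for their respective agent sets (among collision-free joint paths achieving the same starts and goals), then π'' is cost-optimal for A ∪ A'. -/
import Mathlib


open scoped ENNReal

/-- Cost of a walk (list of vertices) under edge-weight function `w`. -/
noncomputable def walkCost {V : Type*} (w : V → V → ℝ≥0∞) : List V → ℝ≥0∞
  | [] => 0
  | [_] => 0
  | u :: v :: r => w u v + walkCost w (v :: r)

/-- Sum-of-costs of a joint path over agent set `A`. -/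
noncomputable def jointCost {Agent V : Type*} (w : V → V → ℝ≥0∞) (A : Finset Agent)
    (π : Agent → List V) : ℝ≥0∞ :=
  ∑ a ∈ A, walkCost w (π a)

/-- No agent of `A` (under `π`) occupies the same vertex at the same time step as a
distinct agent of `B` (under `ρ`). -/
def NoCollide {Agent V : Type*} (π ρ : Agent → List V) (A B : Finset Agent) : Prop :=
  ∀ a ∈ A, ∀ b ∈ B, a ≠ b → ∀ (t : ℕ) (v : V), (π a)[t]? = some v → (ρ b)[t]? ≠ some v

/-- Each agent of `A` starts at its start vertex and ends at its goal vertex. -/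
def SameEndpoints {Agent V : Type*} (s g : Agent → V) (A : Finset Agent)
    (π : Agent → List V) : Prop :=
  ∀ a ∈ A, (π a).head? = some (s a) ∧ (π a).getLast? = some (g a)

/-- `π` is cost-optimal among collision-free joint paths for agent set `A`
with the prescribed starts and goals. -/
def OptimalOn {Agent V : Type*} (w : V → V → ℝ≥0∞) (s g : Agent → V)
    (A : Finset Agent) (π : Agent → List V) : Prop :=
  ∀ ρ : Agent → List V, SameEndpoints s g A ρ → NoCollide ρ ρ A A →
    jointCost w A π ≤ jointCost w A ρ

/-- combining two internally and mutually collision-free joint paths on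
disjoint agent sets adds their costs, and combines optimal paths into an optimal path. -/
theorem stmt0 {Agent V : Type*} [DecidableEq Agent]
    (w : V → V → ℝ≥0∞) (A A' : Finset Agent) (hdisj : Disjoint A A')
    (π π' : Agent → List V) (s g : Agent → V)
    (hπ : NoCollide π π A A) (hπ' : NoCollide π' π' A' A')
    (hcross : NoCollide π π' A A')
    (hend : SameEndpoints s g A π) (hend' : SameEndpoints s g A' π') :
    jointCost w (A ∪ A') (fun a => if a ∈ A then π a else π' a) =
        jointCost w A π + jointCost w A' π' ∧
      (OptimalOn w s g A π → OptimalOn w s g A' π' →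
        OptimalOn w s g (A ∪ A') (fun a => if a ∈ A then π a else π' a)) := by
  have hsum : ∀ ρ : Agent → List V,
      jointCost w (A ∪ A') ρ = jointCost w A ρ + jointCost w A' ρ := by
    intro ρ; exact Finset.sum_union hdisj
  have hcost : jointCost w (A ∪ A') (fun a => if a ∈ A then π a else π' a) =
      jointCost w A π + jointCost w A' π' := by
    rw [hsum]
    congr 1
    · exact Finset.sum_congr rfl fun a ha => by simp [ha]
    · refine Finset.sum_congr rfl fun a ha => ?_
      have : a ∉ A := fun h => (hdisj.forall_ne_finset h ha) rfl
      simp [this]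
  refine ⟨hcost, fun hoptA hoptA' ρ hendρ hcolρ => ?_⟩
  rw [hcost, hsum]
  gcongr
  · exact hoptA ρ (fun a ha => hendρ a (Finset.mem_union_left _ ha))
      (fun a ha b hb => hcolρ a (Finset.mem_union_left _ ha) b (Finset.mem_union_left _ hb))
  · exact hoptA' ρ (fun a ha => hendρ a (Finset.mem_union_right _ ha))
      (fun a ha b hb => hcolρ a (Finset.mem_union_right _ ha) b (Finset.mem_union_right _ hb))
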